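/- The set of well-approximated irrational numbers contains a dense G_δ subset of ℝ; in particular, well-approximated irrational numbers are generic in the sense of Baire category. -/

import Mathlib

open Filter Topology

/-- Iterates of the Gauss map starting at `θ`. -/
noncomputable def gaussIter (θ : ℝ) : ℕ → ℝ
  | 0 => θ
  | k + 1 => (Int.fract (gaussIter θ k))⁻¹

/-- The `k`-th partial quotient (digit) of the continued fraction of `θ`. -/
noncomputable def cfA (θ : ℝ) (k : ℕ) : ℤ := ⌊gaussIter θ k⌋

/-- Numerators of the continued fraction convergents of `θ`. -/
noncomputable def cfP (θ : ℝ) : ℕ → ℤ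
  | 0 => cfA θ 0
  | 1 => cfA θ 1 * cfA θ 0 + 1
  | k + 2 => cfA θ (k + 2) * cfP θ (k + 1) + cfP θ k

/-- Denominators of the continued fraction convergents of `θ`. -/
noncomputable def cfQ (θ : ℝ) : ℕ → ℤ
  | 0 => 1
  | 1 => cfA θ 1
  | k + 2 => cfA θ (k + 2) * cfQ θ (k + 1) + cfQ θ k

/-- An irrational number `θ` is *well-approximated* if there is an increasing sequence
`k n` of natural numbers such that for every constant `C > 0`,
`exp (C * q (k n)) / q (k n + 1) → 0` as `n → ∞`. -/
def WellApproximated (θ : ℝ) : Prop :=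
  Irrational θ ∧ ∃ k : ℕ → ℕ, StrictMono k ∧ ∀ C : ℝ, 0 < C →
    Tendsto (fun n => Real.exp (C * (cfQ θ (k n) : ℝ)) / (cfQ θ (k n + 1) : ℝ))
      atTop (𝓝 0)


/-! If an irrational `θ` lies within `1 / (q * (exp (d * q) + 2 * q))` of a rational `p / q` in
lowest terms, then by Legendre's theorem `p / q` is a convergent `p_n / q_n` of `θ`, and the
classical bound `|q_n θ - p_n| > 1 / (q_n + q_(n+1))` forces `q_(n+1) > exp (d * q_n)`. The union
`U_d` of these balls around all rationals is open and dense, so the irrationals in `⋂ d, U_d`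
form a dense `G_δ`. Each of them has, for every `d`, an index `n` with
`exp (d * q_n) ≤ q_(n+1)`; as `q_n ≥ 1`, for `d` large such indices lie beyond any given bound,
and a diagonal extraction gives the sequence `k n`. -/

open Real

@[simp]
lemma gaussIter_zero (θ : ℝ) : gaussIter θ 0 = θ := rfl

lemma gaussIter_succ' (θ : ℝ) : ∀ k, gaussIter θ (k + 1) = gaussIter (Int.fract θ)⁻¹ k
  | 0 => rfl
  | k + 1 => by rw [gaussIter, gaussIter_succ' θ k, gaussIter]

@[simp]
lemma cfA_zero (θ : ℝ) : cfA θ 0 = ⌊θ⌋ := rfl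

lemma cfA_succ (θ : ℝ) (k : ℕ) : cfA θ (k + 1) = cfA (Int.fract θ)⁻¹ k := by
  rw [cfA, cfA, gaussIter_succ']

lemma Irrational.fract {θ : ℝ} (hθ : Irrational θ) : Irrational (Int.fract θ) :=
  hθ.sub_intCast ⌊θ⌋

lemma Irrational.fract_pos {θ : ℝ} (hθ : Irrational θ) : 0 < Int.fract θ :=
  (Int.fract_nonneg θ).lt_of_ne fun h => hθ.ne_int ⌊θ⌋ (by linarith [Int.floor_add_fract θ])

lemma Irrational.gaussIter {θ : ℝ} (hθ : Irrational θ) : ∀ k, Irrational (gaussIter θ k)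
  | 0 => hθ
  | k + 1 => (hθ.gaussIter k).fract.inv

lemma one_lt_gaussIter_succ {θ : ℝ} (hθ : Irrational θ) (k : ℕ) : 1 < gaussIter θ (k + 1) :=
  (one_lt_inv₀ (hθ.gaussIter k).fract_pos).2 (Int.fract_lt_one _)

lemma one_le_cfA_succ {θ : ℝ} (hθ : Irrational θ) (k : ℕ) : 1 ≤ cfA θ (k + 1) :=
  Int.le_floor.2 (by exact_mod_cast (one_lt_gaussIter_succ hθ k).le)

lemma gaussIter_sub_cfA_mul_gaussIter_succ {θ : ℝ} (hθ : Irrational θ) (k : ℕ) :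
    (gaussIter θ k - cfA θ k) * gaussIter θ (k + 1) = 1 :=
  mul_inv_cancel₀ (hθ.gaussIter k).fract_pos.ne'

lemma cfP_succ_cfQ_succ (θ : ℝ) : ∀ n,
    cfP θ (n + 1) = ⌊θ⌋ * cfP (Int.fract θ)⁻¹ n + cfQ (Int.fract θ)⁻¹ n ∧
      cfQ θ (n + 1) = cfP (Int.fract θ)⁻¹ n
  | 0 => by simp only [cfP, cfQ, cfA_succ, cfA_zero, and_true]; ring
  | 1 => by simp only [cfP, cfQ, cfA_succ, cfA_zero, and_true]; ring
  | n + 2 => by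
    obtain ⟨hP₁, hQ₁⟩ := cfP_succ_cfQ_succ θ (n + 1)
    obtain ⟨hP₀, hQ₀⟩ := cfP_succ_cfQ_succ θ n
    rw [cfP.eq_3 θ (n + 1), cfQ.eq_3 θ (n + 1), hP₁, hQ₁, hP₀, hQ₀, cfP.eq_3, cfQ.eq_3,
      cfA_succ]
    constructor <;> ring

lemma one_le_cfQ {θ : ℝ} (hθ : Irrational θ) : ∀ n, 1 ≤ cfQ θ n
  | 0 => le_rfl
  | 1 => one_le_cfA_succ hθ 0
  | n + 2 => by
    rw [cfQ]
    nlinarith [one_le_cfA_succ hθ (n + 1), one_le_cfQ hθ (n + 1), one_le_cfQ hθ n]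

lemma cfP_succ_mul_cfQ_sub_cfP_mul_cfQ_succ (θ : ℝ) :
    ∀ n, cfP θ (n + 1) * cfQ θ n - cfP θ n * cfQ θ (n + 1) = (-1) ^ n
  | 0 => by simp only [cfP, cfQ]; ring
  | n + 1 => by
    rw [cfP, cfQ, pow_succ, ← cfP_succ_mul_cfQ_sub_cfP_mul_cfQ_succ θ n]
    ring

lemma isCoprime_cfP_cfQ (θ : ℝ) (n : ℕ) : IsCoprime (cfP θ n) (cfQ θ n) := by
  have h := cfP_succ_mul_cfQ_sub_cfP_mul_cfQ_succ θ n
  rcases neg_one_pow_eq_or ℤ n with h₁ | h₁ <;> rw [h₁] at h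
  · exact ⟨-cfQ θ (n + 1), cfP θ (n + 1), by linear_combination h⟩
  · exact ⟨cfQ θ (n + 1), -cfP θ (n + 1), by linear_combination -h⟩

lemma convergent_eq_cfP_div_cfQ {θ : ℝ} (hθ : Irrational θ) (n : ℕ) :
    θ.convergent n = (cfP θ n : ℚ) / cfQ θ n := by
  induction n generalizing θ with
  | zero => simp [cfP, cfQ]
  | succ n ih =>
    obtain ⟨hP, hQ⟩ := cfP_succ_cfQ_succ θ n
    have hne : (cfP (Int.fract θ)⁻¹ n : ℚ) ≠ 0 := by
      rw [← hQ]; exact_mod_cast (zero_lt_one.trans_le (one_le_cfQ hθ (n + 1))).ne'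
    rw [Real.convergent_succ, ih hθ.fract.inv, hP, hQ, inv_div]
    push_cast
    exact add_div' _ _ _ hne

lemma den_convergent {θ : ℝ} (hθ : Irrational θ) (n : ℕ) :
    ((θ.convergent n).den : ℤ) = cfQ θ n := by
  rw [convergent_eq_cfP_div_cfQ hθ n]
  exact Rat.den_div_eq_of_coprime (zero_lt_one.trans_le (one_le_cfQ hθ n))
    (Int.isCoprime_iff_gcd_eq_one.1 (isCoprime_cfP_cfQ θ n))

lemma mul_cfQ_gaussIter_add_cfQ {θ : ℝ} (hθ : Irrational θ) (n : ℕ) :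
    θ * (cfQ θ (n + 1) * gaussIter θ (n + 2) + cfQ θ n) =
      cfP θ (n + 1) * gaussIter θ (n + 2) + cfP θ n := by
  induction n with
  | zero =>
    have h₀ := gaussIter_sub_cfA_mul_gaussIter_succ hθ 0
    have h₁ := gaussIter_sub_cfA_mul_gaussIter_succ hθ 1
    simp only [cfP, cfQ, gaussIter_zero, zero_add] at h₀ h₁ ⊢
    push_cast
    linear_combination gaussIter θ 2 * h₀ - (θ - cfA θ 0) * h₁
  | succ n ih =>
    have h := gaussIter_sub_cfA_mul_gaussIter_succ hθ (n + 2)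
    rw [cfP.eq_3, cfQ.eq_3]
    push_cast
    linear_combination gaussIter θ (n + 3) * ih
      + (cfP θ (n + 1) - θ * cfQ θ (n + 1)) * h

lemma sub_mul_cfQ_gaussIter_add_cfQ {θ : ℝ} (hθ : Irrational θ) (n : ℕ) :
    (θ * cfQ θ n - cfP θ n) * (cfQ θ (n + 1) * gaussIter θ (n + 2) + cfQ θ n) =
      (-1) ^ n * gaussIter θ (n + 2) := by
  have hdet : (cfP θ (n + 1) * cfQ θ n - cfP θ n * cfQ θ (n + 1) : ℝ) = (-1) ^ n := by
    exact_mod_cast cfP_succ_mul_cfQ_sub_cfP_mul_cfQ_succ θ n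
  linear_combination (cfQ θ n : ℝ) * mul_cfQ_gaussIter_add_cfQ hθ n
    + gaussIter θ (n + 2) * hdet

lemma one_lt_cfQ_add_mul_abs_sub {θ : ℝ} (hθ : Irrational θ) (n : ℕ) :
    1 < (cfQ θ (n + 1) + cfQ θ n) * |θ * cfQ θ n - cfP θ n| := by
  set x := gaussIter θ (n + 2)
  have hx : 1 < x := one_lt_gaussIter_succ hθ (n + 1)
  have hq₀ : (1 : ℝ) ≤ cfQ θ n := by exact_mod_cast one_le_cfQ hθ n
  have hq₁ : (1 : ℝ) ≤ cfQ θ (n + 1) := by exact_mod_cast one_le_cfQ hθ (n + 1)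
  have hD : 0 < (cfQ θ (n + 1) * x + cfQ θ n : ℝ) := by positivity
  have herr : |θ * cfQ θ n - cfP θ n| * (cfQ θ (n + 1) * x + cfQ θ n) = x := by
    rw [← abs_of_pos hD, ← abs_mul, sub_mul_cfQ_gaussIter_add_cfQ hθ, abs_mul, abs_neg_one_pow,
      one_mul, abs_of_pos (by linarith)]
  refine lt_of_mul_lt_mul_right ?_ hD.le
  calc 1 * (cfQ θ (n + 1) * x + cfQ θ n : ℝ) < (cfQ θ (n + 1) + cfQ θ n) * x := by nlinarith
    _ = _ := by rw [mul_assoc, herr]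

lemma exists_cfQ_eq_den_of_abs_sub_lt {θ : ℝ} (hθ : Irrational θ) {r : ℚ} {M : ℝ}
    (hM : 2 * r.den ≤ M) (h : |θ - r| < 1 / (r.den * M)) :
    ∃ n, (cfQ θ n : ℝ) = r.den ∧ M < cfQ θ (n + 1) + cfQ θ n := by
  have hq : (0 : ℝ) < r.den := by exact_mod_cast r.pos
  have hlegendre : |θ - r| < 1 / (2 * (r.den : ℝ) ^ 2) :=
    h.trans_le (one_div_le_one_div_of_le (by positivity) (by nlinarith))
  obtain ⟨n, rfl⟩ := Real.exists_rat_eq_convergent hlegendre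
  have hden : ((θ.convergent n).den : ℝ) = cfQ θ n := by exact_mod_cast den_convergent hθ n
  have hr : ((θ.convergent n : ℚ) : ℝ) = cfP θ n / cfQ θ n := by
    rw [convergent_eq_cfP_div_cfQ hθ n]; norm_cast
  refine ⟨n, hden.symm, ?_⟩
  rw [hden] at hq h
  rw [hr] at h
  have herr : |θ * cfQ θ n - cfP θ n| < 1 / M :=
    calc |θ * cfQ θ n - cfP θ n| = cfQ θ n * |θ - cfP θ n / cfQ θ n| := by
          rw [mul_comm, ← abs_of_pos hq, ← abs_mul, abs_of_pos hq, mul_sub,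
            mul_div_cancel₀ _ hq.ne']
      _ < cfQ θ n * (1 / (cfQ θ n * M)) := mul_lt_mul_of_pos_left h hq
      _ = 1 / M := by field_simp
  have hsum : 0 ≤ (cfQ θ (n + 1) + cfQ θ n : ℝ) := by
    have := one_le_cfQ hθ (n + 1); positivity
  have := (one_lt_cfQ_add_mul_abs_sub hθ n).trans_le (mul_le_mul_of_nonneg_left herr.le hsum)
  rwa [mul_one_div, one_lt_div (by linarith)] at this

def approxNbhd (d : ℕ) : Set ℝ :=
  ⋃ r : ℚ, Metric.ball (r : ℝ) (1 / (r.den * (exp (d * r.den) + 2 * r.den)))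

lemma isOpen_approxNbhd (d : ℕ) : IsOpen (approxNbhd d) :=
  isOpen_iUnion fun _ => Metric.isOpen_ball

lemma dense_approxNbhd (d : ℕ) : Dense (approxNbhd d) :=
  Rat.denseRange_cast.mono <| Set.range_subset_iff.2 fun r =>
    Set.mem_iUnion.2 ⟨r, Metric.mem_ball_self (by have := r.pos; positivity)⟩

lemma exists_exp_mul_cfQ_le_of_mem_approxNbhd {θ : ℝ} (hθ : Irrational θ) {d : ℕ}
    (h : θ ∈ approxNbhd d) : ∃ k, exp (d * cfQ θ k) ≤ cfQ θ (k + 1) := by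
  obtain ⟨r, hr⟩ := Set.mem_iUnion.1 h
  obtain ⟨n, hn, hlt⟩ := exists_cfQ_eq_den_of_abs_sub_lt hθ
    (by linarith [exp_pos (d * r.den)]) (Metric.mem_ball.1 hr)
  exact ⟨n, by rw [hn]; linarith⟩

lemma frequently_exp_mul_le {q : ℕ → ℝ} (hq : ∀ k, 1 ≤ q k)
    (h : ∀ d : ℕ, ∃ k, exp (d * q k) ≤ q (k + 1)) (d : ℕ) :
    ∃ᶠ k in atTop, exp (d * q k) ≤ q (k + 1) := by
  refine frequently_atTop.2 fun N => ?_
  -- a witness for an exponent `D` beyond all of `q 1, …, q N` must lie beyond `N`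
  set M := ∑ j ∈ Finset.range N, q (j + 1)
  obtain ⟨D, hdD, hMD⟩ : ∃ D : ℕ, (d : ℝ) ≤ D ∧ M ≤ D :=
    ⟨max d ⌈M⌉₊, by exact_mod_cast le_max_left _ _,
      (Nat.le_ceil M).trans (by exact_mod_cast le_max_right _ _)⟩
  obtain ⟨k, hk⟩ := h D
  have hD : (D : ℝ) ≤ D * q k := le_mul_of_one_le_right (Nat.cast_nonneg _) (hq k)
  refine ⟨k, not_lt.1 fun hkN => ?_,
    (exp_le_exp.2 (mul_le_mul_of_nonneg_right hdD (zero_le_one.trans (hq k)))).trans hk⟩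
  have hM : q (k + 1) ≤ M := Finset.single_le_sum (fun j _ => zero_le_one.trans (hq (j + 1)))
    (Finset.mem_range.2 hkN)
  linarith [add_one_le_exp (D : ℝ), exp_le_exp.2 hD]

lemma exists_strictMono_tendsto_exp_mul_div {q : ℕ → ℝ} (hq : ∀ k, 1 ≤ q k)
    (h : ∀ d : ℕ, ∃ k, exp (d * q k) ≤ q (k + 1)) :
    ∃ φ : ℕ → ℕ, StrictMono φ ∧ ∀ C : ℝ,
      Tendsto (fun n => exp (C * q (φ n)) / q (φ n + 1)) atTop (𝓝 0) := by
  obtain ⟨φ, hφ, hφq⟩ := extraction_forall_of_frequently (frequently_exp_mul_le hq h)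
  refine ⟨φ, hφ, fun C => ?_⟩
  have hlim : Tendsto (fun n : ℕ => exp (C - n)) atTop (𝓝 0) :=
    tendsto_exp_atBot.comp (tendsto_atBot_add_const_left _ C
      (tendsto_neg_atBot_iff.2 tendsto_natCast_atTop_atTop))
  refine squeeze_zero' (Eventually.of_forall fun n => ?_) ?_ hlim
  · exact div_nonneg (exp_pos _).le (zero_le_one.trans (hq _))
  · filter_upwards [eventually_ge_atTop ⌈C⌉₊] with n hn
    have hCn : C ≤ n := (Nat.le_ceil C).trans (by exact_mod_cast hn)
    calc exp (C * q (φ n)) / q (φ n + 1) ≤ exp (C * q (φ n)) / exp (n * q (φ n)) :=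
          div_le_div_of_nonneg_left (exp_pos _).le (exp_pos _) (hφq n)
      _ = exp ((C - n) * q (φ n)) := by rw [← exp_sub, sub_mul]
      _ ≤ exp (C - n) := exp_le_exp.2 (by nlinarith [hq (φ n)])

lemma wellApproximated_of_forall_exists {θ : ℝ} (hθ : Irrational θ)
    (h : ∀ d : ℕ, ∃ k, exp (d * cfQ θ k) ≤ cfQ θ (k + 1)) : WellApproximated θ := by
  obtain ⟨φ, hφ, hlim⟩ := exists_strictMono_tendsto_exp_mul_div
    (fun k => by exact_mod_cast one_le_cfQ hθ k) h
  exact ⟨hθ, φ, hφ, fun C _ => hlim C⟩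

/-- Well-approximated irrational numbers are generic in the sense of
Baire category: they contain a dense `G_δ` subset of `ℝ`. -/
theorem wellApproximated_generic :
    ∃ S : Set ℝ, IsGδ S ∧ Dense S ∧ S ⊆ {θ : ℝ | WellApproximated θ} := by
  have hGδ : IsGδ (⋂ d, approxNbhd d) := .iInter fun d => (isOpen_approxNbhd d).isGδ
  refine ⟨{θ | Irrational θ} ∩ ⋂ d, approxNbhd d, IsGδ.setOfPred_irrational.inter hGδ,
    dense_irrational.inter_of_Gδ IsGδ.setOfPred_irrational hGδ
      (dense_iInter_of_isOpen isOpen_approxNbhd dense_approxNbhd), ?_⟩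
  rintro θ ⟨hθ, hθU⟩
  exact wellApproximated_of_forall_exists hθ fun d =>
    exists_exp_mul_cfQ_le_of_mem_approxNbhd hθ (Set.mem_iInter.1 hθU d)
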